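/- arXiv:1208.4995 — 4 statements merged into one kernel-verified Lean document; each statement's English description precedes it below -/
import Mathlib

section
/- An edge e = (x',y)(x,y') of G × H lies in the complete bipartite subgraph K(u,v) if and only if (u,v) = (x,y) or (u,v) = (x',y'). -/
open SimpleGraph

/-- The direct (tensor) product of two simple graphs. -/
def tensorProd {α β : Type*} (G : SimpleGraph α) (H : SimpleGraph β) :
    SimpleGraph (α × β) where
  Adj p q := G.Adj p.1 q.1 ∧ H.Adj p.2 q.2
  symm := ⟨fun _ _ h => ⟨h.1.symm, h.2.symm⟩⟩
  loopless := ⟨fun p h => G.loopless.irrefl p.1 h.1⟩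

instance {α β : Type*} (G : SimpleGraph α) (H : SimpleGraph β)
    [DecidableRel G.Adj] [DecidableRel H.Adj] :
    DecidableRel (tensorProd G H).Adj :=
  fun _ _ => instDecidableAnd

/-- The edge connectivity of a graph: the least size of a set of edges whose
deletion disconnects the graph. -/
noncomputable def edgeConn {V : Type*} (G : SimpleGraph V) : ℕ :=
  sInf {n | ∃ S ⊆ G.edgeSet, ¬ (G.deleteEdges S).Connected ∧ S.ncard = n}

/-- The bipartite edge frustration: the least number of edges whose deletion
makes the graph bipartite. -/
noncomputable def frustration {V : Type*} (G : SimpleGraph V) : ℕ :=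
  sInf {n | ∃ S ⊆ G.edgeSet, ((G.deleteEdges S).Colorable 2) ∧ S.ncard = n}

/-- ρ(G) = min over partitions {A, Aᶜ} of V(G) with A nonempty of
2·φ(G[A]) + |[A, Aᶜ]|. -/
noncomputable def rho {V : Type*} (G : SimpleGraph V) : ℕ :=
  sInf {n | ∃ A : Set V, A.Nonempty ∧
    n = 2 * frustration (G.induce A) +
      {e ∈ G.edgeSet | ∃ a ∈ A, ∃ b ∉ A, e = s(a, b)}.ncard}

/-- ψ(G,H) = ρ(G)·|E(H)| + 2·φ(H)·|E(G)|. -/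
noncomputable def psi {α β : Type*} (G : SimpleGraph α) (H : SimpleGraph β) : ℕ :=
  rho G * H.edgeSet.ncard + 2 * frustration H * G.edgeSet.ncard

/-- The vertex set of the complete bipartite subgraph K(u,v) of G × H,
namely (N_G(u) × {v}) ∪ ({u} × N_H(v)). -/
def Kset {α β : Type*} (G : SimpleGraph α) (H : SimpleGraph β) (u : α) (v : β) :
    Set (α × β) :=
  {p | (p.1 ∈ G.neighborSet u ∧ p.2 = v) ∨ (p.1 = u ∧ p.2 ∈ H.neighborSet v)}

section Kset

variable {α β : Type*} {G : SimpleGraph α} {H : SimpleGraph β} {u : α} {v : β}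

theorem mem_Kset {p : α × β} :
    p ∈ Kset G H u v ↔ (G.Adj u p.1 ∧ p.2 = v) ∨ (p.1 = u ∧ H.Adj v p.2) :=
  Iff.rfl

theorem mk_mem_Kset_of_adj_left {a : α} (h : G.Adj u a) : (a, v) ∈ Kset G H u v :=
  Or.inl ⟨h, rfl⟩

theorem mk_mem_Kset_of_adj_right {b : β} (h : H.Adj v b) : (u, b) ∈ Kset G H u v :=
  Or.inr ⟨rfl, h⟩

/-- Two vertices of `K(u,v)` differing in both coordinates cannot lie in the same part
`N_G(u) × {v}` or `{u} × N_H(v)`, so one sits in each, which pins down `(u,v)`. -/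
theorem eq_or_eq_of_mk_mem_Kset {x x' : α} {y y' : β} (hx : x ≠ x') (hy : y ≠ y')
    (h₁ : (x', y) ∈ Kset G H u v) (h₂ : (x, y') ∈ Kset G H u v) :
    (u, v) = (x, y) ∨ (u, v) = (x', y') := by
  rcases mem_Kset.1 h₁ with ⟨-, rfl⟩ | ⟨rfl, -⟩ <;>
    rcases mem_Kset.1 h₂ with ⟨-, hy'⟩ | ⟨hx', -⟩
  · exact absurd hy'.symm hy
  · exact Or.inl (Prod.ext hx'.symm rfl)
  · exact Or.inr (Prod.ext rfl hy'.symm)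
  · exact absurd hx' hx

end Kset

theorem edge_in_K_iff {α β : Type*} (G : SimpleGraph α) (H : SimpleGraph β)
    (u x x' : α) (v y y' : β) (hG : G.Adj x x') (hH : H.Adj y y') :
    ((x', y) ∈ Kset G H u v ∧ (x, y') ∈ Kset G H u v) ↔
      ((u, v) = (x, y) ∨ (u, v) = (x', y')) := by
  refine ⟨fun h => eq_or_eq_of_mk_mem_Kset hG.ne hH.ne h.1 h.2, ?_⟩
  rintro (h | h) <;> obtain ⟨rfl, rfl⟩ := Prod.ext_iff.1 h
  · exact ⟨mk_mem_Kset_of_adj_left hG, mk_mem_Kset_of_adj_right hH⟩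
  · exact ⟨mk_mem_Kset_of_adj_right hH.symm, mk_mem_Kset_of_adj_left hG.symm⟩
end

section
/- If both G and H are bipartite graphs each containing at least one edge, then the direct product G × H is disconnected. -/
open SimpleGraph

/-!
Given 2-colourings `c` of `G` and `d` of `H`, whether `c a = d b` holds at `(a, b)` is
unchanged along every edge of `G × H`, since an edge flips both colours. An edge `uv` of `G`
has `c u ≠ c v`, so for any vertex `x` of `H` the vertices `(u, x)` and `(v, x)` lie in
different components.
-/

theorem Fin.two_eq_iff_eq_of_ne {a a' b b' : Fin 2} (ha : a ≠ a') (hb : b ≠ b') :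
    a = b ↔ a' = b' := by
  revert a a' b b'
  decide

theorem Fin.two_eq_iff_ne_of_ne {a a' : Fin 2} (ha : a ≠ a') (b : Fin 2) : a = b ↔ a' ≠ b := by
  revert a a' b
  decide

theorem SimpleGraph.Reachable.apply_eq {V γ : Type*} {G : SimpleGraph V} (f : V → γ)
    (hf : ∀ ⦃u v⦄, G.Adj u v → f u = f v) {u v : V} (h : G.Reachable u v) : f u = f v := by
  obtain ⟨w⟩ := h
  induction w with
  | nil => rfl
  | cons hadj _ ih => exact (hf hadj).trans ih

theorem tensorProd_colorings_eq_iff_of_adj {α β : Type*} {G : SimpleGraph α} {H : SimpleGraph β}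
    (c : G.Coloring (Fin 2)) (d : H.Coloring (Fin 2)) {p q : α × β}
    (h : (tensorProd G H).Adj p q) : c p.1 = d p.2 ↔ c q.1 = d q.2 :=
  Fin.two_eq_iff_eq_of_ne (c.valid h.1) (d.valid h.2)

theorem tensor_of_bipartite_disconnected_general {α β : Type*}
    (G : SimpleGraph α) (H : SimpleGraph β)
    (hG : G.Colorable 2) (hH : H.Colorable 2)
    (hGe : G.edgeSet.Nonempty) :
    ¬ (tensorProd G H).Connected := by
  obtain ⟨c⟩ := hG
  obtain ⟨d⟩ := hH
  obtain ⟨⟨u, v⟩, huv : G.Adj u v⟩ := hGe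
  intro hconn
  obtain ⟨⟨-, x⟩⟩ := hconn.nonempty
  have hsame : (c u = d x) = (c v = d x) :=
    (hconn.preconnected (u, x) (v, x)).apply_eq (fun p ↦ c p.1 = d p.2)
      fun _ _ h ↦ propext (tensorProd_colorings_eq_iff_of_adj c d h)
  exact iff_not_self (hsame ▸ Fin.two_eq_iff_ne_of_ne (c.valid huv) (d x))

theorem tensor_of_bipartite_disconnected {α β : Type*} [Fintype α] [Fintype β]
    (G : SimpleGraph α) (H : SimpleGraph β)
    (hG : G.Colorable 2) (hH : H.Colorable 2)
    (hGe : G.edgeSet.Nonempty) (hHe : H.edgeSet.Nonempty) :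
    ¬ (tensorProd G H).Connected :=
  tensor_of_bipartite_disconnected_general G H hG hH hGe
end

section
/- If S is a minimum edge-cut of G with components X and Y of G − S, then the set of edges of G × H with one endvertex in X × V(H) and the other in Y × V(H) is an edge-cut of G × H of size 2·λ(G)·|E(H)|, and the components of G × H minus this set restricted to each side are X × V(H) and Y × V(H) (in particular no edge of G × H joins X × V(H) to Y × V(H) other than these). -/
open SimpleGraph

/-!
The edges of `G` between `X` and `Y` all lie in the minimum cut `S` (no edge of `G - S` crosses),
and they already disconnect `G`, so there are exactly `λ(G)` of them. An edge of `G × H` from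
`X × V(H)` to `Y × V(H)` is the same as an oriented `X`–`Y` edge of `G` together with an oriented
edge of `H`, which gives `2 · λ(G) · |E(H)|` edges; every path from `X × V(H)` to `Y × V(H)`
uses one of them.
-/

namespace SimpleGraph

variable {V : Type*} (G : SimpleGraph V)

def crossEdges (A B : Set V) : Set (Sym2 V) :=
  {e ∈ G.edgeSet | ∃ u v, e = s(u, v) ∧ u ∈ A ∧ v ∈ B}

def crossDarts (A B : Set V) : Set (V × V) :=
  {p | p.1 ∈ A ∧ p.2 ∈ B ∧ G.Adj p.1 p.2}

variable {G} {A B : Set V}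

lemma crossEdges_eq_image :
    G.crossEdges A B = (fun p : V × V => s(p.1, p.2)) '' G.crossDarts A B := by
  ext e
  constructor
  · rintro ⟨he, u, v, rfl, hu, hv⟩
    exact ⟨(u, v), ⟨hu, hv, he⟩, rfl⟩
  · rintro ⟨⟨u, v⟩, ⟨hu, hv, huv⟩, rfl⟩
    exact ⟨huv, u, v, rfl, hu, hv⟩

lemma ncard_crossEdges (h : Disjoint A B) :
    (G.crossEdges A B).ncard = (G.crossDarts A B).ncard := by
  rw [crossEdges_eq_image]
  refine Set.InjOn.ncard_image ?_
  rintro ⟨u, v⟩ ⟨hu, -, -⟩ ⟨u', v'⟩ ⟨-, hv', -⟩ heq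
  rcases Sym2.eq_iff.mp heq with ⟨rfl, rfl⟩ | ⟨rfl, -⟩
  · rfl
  · exact absurd hv' (h.notMem_of_mem_left hu)

lemma not_adj_deleteEdges_crossEdges {u v : V} (hu : u ∈ A) (hv : v ∈ B) :
    ¬ (G.deleteEdges (G.crossEdges A B)).Adj u v :=
  fun h => (deleteEdges_adj.mp h).2 ⟨(deleteEdges_adj.mp h).1, u, v, rfl, hu, hv⟩

lemma not_connected_deleteEdges_crossEdges (hA : A.Nonempty) (hB : B.Nonempty)
    (hAB : A ∪ B = Set.univ) (hd : Disjoint A B) :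
    ¬ (G.deleteEdges (G.crossEdges A B)).Connected := by
  obtain ⟨u, hu⟩ := hA
  obtain ⟨v, hv⟩ := hB
  intro hconn
  obtain ⟨d, -, hd₁, hd₂⟩ := (hconn.preconnected u v).some.exists_boundary_dart A hu
    (hd.notMem_of_mem_right hv)
  have hd₂' : d.snd ∈ B := (hAB.symm ▸ Set.mem_univ d.snd : d.snd ∈ A ∪ B).resolve_left hd₂
  exact not_adj_deleteEdges_crossEdges hd₁ hd₂' d.adj

lemma crossEdges_subset_of_not_reachable {S : Set (Sym2 V)}
    (h : ∀ u ∈ A, ∀ v ∈ B, ¬ (G.deleteEdges S).Reachable u v) : G.crossEdges A B ⊆ S := by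
  rintro _ ⟨huv, u, v, rfl, hu, hv⟩
  by_contra hS
  exact h u hu v hv (deleteEdges_adj.mpr ⟨huv, hS⟩).reachable

lemma edgeConn_le_ncard {S : Set (Sym2 V)} (hS : S ⊆ G.edgeSet)
    (h : ¬ (G.deleteEdges S).Connected) : edgeConn G ≤ S.ncard :=
  Nat.sInf_le ⟨S, hS, h, rfl⟩

lemma crossEdges_subset_edgeSet : G.crossEdges A B ⊆ G.edgeSet := fun _ h => h.1

lemma ncard_setOf_adj [Fintype V] :
    {p : V × V | G.Adj p.1 p.2}.ncard = 2 * G.edgeSet.ncard := by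
  classical
  have : {p : V × V | G.Adj p.1 p.2} = Set.range (Dart.toProd (G := G)) := by
    ext ⟨u, v⟩
    exact ⟨fun h => ⟨⟨(u, v), h⟩, rfl⟩, by rintro ⟨d, hd⟩; exact hd ▸ d.adj⟩
  rw [this, Set.ncard_range_of_injective Dart.toProd_injective, Nat.card_eq_fintype_card,
    dart_card_eq_twice_card_edges, ← Set.ncard_coe_finset, coe_edgeFinset]

lemma crossDarts_tensorProd {W : Type*} (H : SimpleGraph W) :
    (tensorProd G H).crossDarts (Prod.fst ⁻¹' A) (Prod.fst ⁻¹' B) =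
      Equiv.prodProdProdComm V W V W ⁻¹' (G.crossDarts A B ×ˢ {p | H.Adj p.1 p.2}) := by
  ext ⟨⟨u, x⟩, ⟨v, y⟩⟩
  simp [crossDarts, tensorProd, and_assoc]

lemma ncard_crossEdges_tensorProd {W : Type*} [Fintype W] (H : SimpleGraph W)
    (hd : Disjoint A B) :
    ((tensorProd G H).crossEdges (Prod.fst ⁻¹' A) (Prod.fst ⁻¹' B)).ncard =
      2 * (G.crossEdges A B).ncard * H.edgeSet.ncard := by
  rw [ncard_crossEdges (hd.preimage _), ncard_crossEdges hd, crossDarts_tensorProd,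
    Set.ncard_preimage_of_injective_subset_range (Equiv.injective _) (by simp), Set.ncard_prod,
    ncard_setOf_adj]
  ring

lemma ncard_crossEdges_eq_edgeConn [Finite V] {S : Set (Sym2 V)} (hS : S.ncard = edgeConn G)
    (hA : A.Nonempty) (hB : B.Nonempty) (hAB : A ∪ B = Set.univ) (hd : Disjoint A B)
    (hsep : ∀ u ∈ A, ∀ v ∈ B, ¬ (G.deleteEdges S).Reachable u v) :
    (G.crossEdges A B).ncard = edgeConn G :=
  le_antisymm (hS ▸ Set.ncard_le_ncard (crossEdges_subset_of_not_reachable hsep))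
    (edgeConn_le_ncard crossEdges_subset_edgeSet
      (not_connected_deleteEdges_crossEdges hA hB hAB hd))

end SimpleGraph

theorem preimage_of_min_cut_is_cut_general {α β : Type*} [Fintype α] [Fintype β]
    (G : SimpleGraph α) (H : SimpleGraph β) (hHe : H.edgeSet.Nonempty)
    (S : Set (Sym2 α))
    (hSmin : S.ncard = edgeConn G)
    (X Y : Set α) (hXne : X.Nonempty) (hYne : Y.Nonempty)
    (hunion : X ∪ Y = Set.univ) (hdisj : Disjoint X Y)
    (hcomp : ∀ u v : α, (G.deleteEdges S).Reachable u v ↔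
      ((u ∈ X ∧ v ∈ X) ∨ (u ∈ Y ∧ v ∈ Y))) :
    {e ∈ (tensorProd G H).edgeSet |
        ∃ p q : α × β, e = s(p, q) ∧ p.1 ∈ X ∧ q.1 ∈ Y}.ncard =
      2 * edgeConn G * H.edgeSet.ncard ∧
    ¬ ((tensorProd G H).deleteEdges
        {e ∈ (tensorProd G H).edgeSet |
          ∃ p q : α × β, e = s(p, q) ∧ p.1 ∈ X ∧ q.1 ∈ Y}).Connected ∧
    (∀ p q : α × β, p.1 ∈ X → q.1 ∈ Y →
      ¬ ((tensorProd G H).deleteEdges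
          {e ∈ (tensorProd G H).edgeSet |
            ∃ p q : α × β, e = s(p, q) ∧ p.1 ∈ X ∧ q.1 ∈ Y}).Adj p q) := by
  have hsep : ∀ u ∈ X, ∀ v ∈ Y, ¬ (G.deleteEdges S).Reachable u v := fun u hu v hv h => by
    rcases (hcomp u v).mp h with ⟨-, hvX⟩ | ⟨huY, -⟩
    exacts [hdisj.notMem_of_mem_left hvX hv, hdisj.notMem_of_mem_left hu huY]
  have : Nonempty β := by
    obtain ⟨e, -⟩ := hHe
    exact ⟨e.out.1⟩
  have hunion' : Prod.fst ⁻¹' X ∪ Prod.fst ⁻¹' Y = (Set.univ : Set (α × β)) := by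
    rw [← Set.preimage_union, hunion, Set.preimage_univ]
  refine ⟨?_, not_connected_deleteEdges_crossEdges (hXne.preimage Prod.fst_surjective)
      (hYne.preimage Prod.fst_surjective) hunion' (hdisj.preimage _),
    fun p q hp hq =>
      not_adj_deleteEdges_crossEdges (A := Prod.fst ⁻¹' X) (B := Prod.fst ⁻¹' Y) hp hq⟩
  rw [← ncard_crossEdges_eq_edgeConn hSmin hXne hYne hunion hdisj hsep]
  exact ncard_crossEdges_tensorProd H hdisj

theorem preimage_of_min_cut_is_cut {α β : Type*} [Fintype α] [Fintype β]
    (G : SimpleGraph α) (H : SimpleGraph β) (hHe : H.edgeSet.Nonempty)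
    (S : Set (Sym2 α)) (hSsub : S ⊆ G.edgeSet)
    (hSdisc : ¬ (G.deleteEdges S).Connected)
    (hSmin : S.ncard = edgeConn G)
    (X Y : Set α) (hXne : X.Nonempty) (hYne : Y.Nonempty)
    (hunion : X ∪ Y = Set.univ) (hdisj : Disjoint X Y)
    (hcomp : ∀ u v : α, (G.deleteEdges S).Reachable u v ↔
      ((u ∈ X ∧ v ∈ X) ∨ (u ∈ Y ∧ v ∈ Y))) :
    {e ∈ (tensorProd G H).edgeSet |
        ∃ p q : α × β, e = s(p, q) ∧ p.1 ∈ X ∧ q.1 ∈ Y}.ncard =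
      2 * edgeConn G * H.edgeSet.ncard ∧
    ¬ ((tensorProd G H).deleteEdges
        {e ∈ (tensorProd G H).edgeSet |
          ∃ p q : α × β, e = s(p, q) ∧ p.1 ∈ X ∧ q.1 ∈ Y}).Connected ∧
    (∀ p q : α × β, p.1 ∈ X → q.1 ∈ Y →
      ¬ ((tensorProd G H).deleteEdges
          {e ∈ (tensorProd G H).edgeSet |
            ∃ p q : α × β, e = s(p, q) ∧ p.1 ∈ X ∧ q.1 ∈ Y}).Adj p q) :=
  preimage_of_min_cut_is_cut_general G H hHe S hSmin X Y hXne hYne hunion hdisj hcomp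
end

section
/- Let G and H be finite simple graphs with δ(G) ≤ δ(H), let S be a minimum edge-cut in G × H with |S| < δ(G × H), and let B, W be the two connected components of (G × H) − S. Then for every vertex (x,y) of G × H, either N_G(x) × {y} ⊆ B or N_G(x) × {y} ⊆ W. -/
open SimpleGraph

/-!
Every edge of `G × H` between `B` and `W` lies in `S`, so it suffices to show that a bichromatic
`N_G(x) × {y}` forces at least `δ(G) δ(H) ≥ δ(G × H)` such edges. They are counted as ordered
pairs running from a set `X` to its complement, so that distinct pairs are distinct edges.

If `N_G(x)` contains non-adjacent `a, b` with `(a, y) ∈ B`, `(b, y) ∈ W`, fix `w ∈ N_H(y)` and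
pick `c ∈ {a, b}` with `(c, y)` on the other side from `(x, w)`. Either the layer `N_G(c) × {w}`
is bichromatic, and each `(c, ζ)` with `ζ ∈ N_H(w)` sees both sides, or it lies on the side of
`(x, w)` and is joined to `(c, y)`. So level `w` receives at least `δ(G)` pairs from the columns
`{a, b} × V(H)`, and `a ≁ b` keeps them oriented.
Otherwise the two colour classes of `N_G(x) × {y}` are completely joined. Each level `h` with
`N_G(x) × {h}` bichromatic then gives `δ(H)` pairs out of the column `{x} × V(H)`, each
monochromatic layer `N_G(x) × {z}`, `z ∈ N_H(y)`, gives `|N_B| |N_W| ≥ δ(G) - 1` pairs into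
`N_G(x) × {y}`, and `y` itself is bichromatic; these add up to `δ(G) δ(H)`.
-/

open Finset

-- If `k < g`, the right side is at least `k n + (n + 1 - k)(g - 1) = g n + (k - 1)(n + 1 - g)`.
lemma mul_le_add_mul_of_le_add_one {g n k m p : ℕ} (hgn : g ≤ n) (hk : 1 ≤ k) (hkm : n + 1 ≤ k + m)
    (hp : g ≤ p + 1) : g * n ≤ k * n + m * p := by
  rcases le_or_gt g k with hgk | hkg
  · nlinarith
  · zify at *
    nlinarith [mul_nonneg (sub_nonneg.2 hkm) (show (0 : ℤ) ≤ p by positivity),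
      mul_nonneg (show (0 : ℤ) ≤ n + 1 - k by linarith) (show (0 : ℤ) ≤ p + 1 - g by linarith),
      mul_nonneg (show (0 : ℤ) ≤ k - 1 by linarith) (show (0 : ℤ) ≤ n + 1 - g by linarith)]

namespace SimpleGraph

variable {V : Type*} (Γ : SimpleGraph V)

def cutEdges (A : Set V) : Set (Sym2 V) :=
  {e ∈ Γ.edgeSet | ∃ a ∈ A, ∃ b ∉ A, e = s(a, b)}

open Classical in
noncomputable def crossPairs [Fintype V] (A P Q : Set V) : Finset (V × V) :=
  {e | e.1 ∈ P ∧ e.2 ∈ Q ∧ Γ.Adj e.1 e.2 ∧ (e.1 ∈ A ↔ e.2 ∉ A)}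

variable {Γ} [Fintype V] {A : Set V}

@[simp]
lemma mem_crossPairs {P Q : Set V} {e : V × V} :
    e ∈ Γ.crossPairs A P Q ↔ e.1 ∈ P ∧ e.2 ∈ Q ∧ Γ.Adj e.1 e.2 ∧ (e.1 ∈ A ↔ e.2 ∉ A) := by
  simp [crossPairs]

lemma crossPairs_mono {P P' Q Q' : Set V} (hP : P ⊆ P') (hQ : Q ⊆ Q') :
    Γ.crossPairs A P Q ⊆ Γ.crossPairs A P' Q' := fun e he => by
  rw [mem_crossPairs] at he ⊢
  exact ⟨hP he.1, hQ he.2.1, he.2.2⟩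

lemma disjoint_crossPairs {P P' Q Q' : Set V} (h : Disjoint P P' ∨ Disjoint Q Q') :
    Disjoint (Γ.crossPairs A P Q) (Γ.crossPairs A P' Q') := by
  refine Finset.disjoint_left.2 fun e he he' => ?_
  rw [mem_crossPairs] at he he'
  rcases h with h | h
  · exact Set.disjoint_left.1 h he.1 he'.1
  · exact Set.disjoint_left.1 h he.2.1 he'.2.1

lemma card_mul_card_le_card_crossPairs {P Q : Set V} {P' Q' : Finset V} (hP : ↑P' ⊆ P)
    (hQ : ↑Q' ⊆ Q) (hcross : ∀ p ∈ P', ∀ q ∈ Q', Γ.Adj p q ∧ (p ∈ A ↔ q ∉ A)) :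
    P'.card * Q'.card ≤ (Γ.crossPairs A P Q).card := by
  rw [← card_product]
  refine card_le_card fun e he => ?_
  rw [mem_product] at he
  exact mem_crossPairs.2 ⟨hP he.1, hQ he.2, hcross _ he.1 _ he.2⟩

/-- Orienting the pairs from `X` to its complement makes `Sym2.mk` injective on them. -/
lemma card_crossPairs_le_ncard_cutEdges (X : Set V) :
    (Γ.crossPairs A X Xᶜ).card ≤ (Γ.cutEdges A).ncard := by
  rw [← Set.ncard_coe_finset]
  refine Set.ncard_le_ncard_of_injOn (fun e => s(e.1, e.2)) ?_ ?_ (Set.toFinite _)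
  · rintro ⟨p, q⟩ he
    obtain ⟨-, -, hpq, hside⟩ := mem_crossPairs.1 he
    refine ⟨hpq, ?_⟩
    by_cases hp : p ∈ A
    · exact ⟨p, hp, q, hside.1 hp, rfl⟩
    · exact ⟨q, not_not.1 (mt hside.2 hp), p, hp, Sym2.eq_swap⟩
  · rintro e he e' he' h
    refine (Sym2.mk_eq_mk_iff.1 h).resolve_right fun hswap => ?_
    subst hswap
    exact (mem_crossPairs.1 he').2.1 (mem_crossPairs.1 he).1

lemma sum_card_crossPairs_le_ncard_cutEdges {ι : Type*} (X : Set V) (I : Finset ι)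
    (P Q : ι → Set V) (hP : ∀ i ∈ I, P i ⊆ X) (hQ : ∀ i ∈ I, Q i ⊆ Xᶜ)
    (hdisj : ∀ i ∈ I, ∀ j ∈ I, i ≠ j → Disjoint (P i) (P j) ∨ Disjoint (Q i) (Q j)) :
    ∑ i ∈ I, (Γ.crossPairs A (P i) (Q i)).card ≤ (Γ.cutEdges A).ncard := by
  classical
  rw [← card_biUnion fun i hi j hj hij => disjoint_crossPairs (hdisj i hi j hj hij)]
  refine (card_le_card ?_).trans (card_crossPairs_le_ncard_cutEdges X)
  exact biUnion_subset.2 fun i hi => crossPairs_mono (hP i hi) (hQ i hi)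

end SimpleGraph

section TensorProd

variable {α β : Type*} {G : SimpleGraph α} {H : SimpleGraph β}

lemma tensorProd_adj {p q : α × β} :
    (tensorProd G H).Adj p q ↔ G.Adj p.1 q.1 ∧ H.Adj p.2 q.2 :=
  Iff.rfl

variable [Fintype α] [Fintype β] {A : Set (α × β)}

/-- Each `(c, ζ)` with `ζ ∈ N_H(w)` is adjacent to the whole layer `N_G(c) × {w}`, which meets
both sides of `A`. -/
lemma degree_le_card_crossPairs_column [DecidableRel H.Adj] {c d₁ d₂ : α} {w : β}
    (h₁ : G.Adj c d₁) (h₂ : G.Adj c d₂) (hd : (d₁, w) ∈ A ↔ (d₂, w) ∉ A) :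
    H.degree w ≤
      ((tensorProd G H).crossPairs A ({c} ×ˢ Set.univ) (G.neighborSet c ×ˢ {w})).card := by
  refine card_le_card_of_surjOn (fun e => e.1.2) fun ζ hζ => ?_
  have hwζ : H.Adj w ζ := by simpa using hζ
  by_cases hside : (c, ζ) ∈ A ↔ (d₁, w) ∉ A
  · exact ⟨((c, ζ), (d₁, w)), by simpa [tensorProd_adj, h₁] using ⟨hwζ.symm, hside⟩, rfl⟩
  · exact ⟨((c, ζ), (d₂, w)), by simpa [tensorProd_adj, h₂] using ⟨hwζ.symm, by tauto⟩, rfl⟩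

lemma tensorProd_degree [DecidableRel G.Adj] [DecidableRel H.Adj] (x : α) (y : β) :
    (tensorProd G H).degree (x, y) = G.degree x * H.degree y := by
  have : (tensorProd G H).neighborFinset (x, y) = G.neighborFinset x ×ˢ H.neighborFinset y := by
    ext; simp [tensorProd_adj]
  rw [← card_neighborFinset_eq_degree, this, card_product, card_neighborFinset_eq_degree,
    card_neighborFinset_eq_degree]

lemma minDegree_tensorProd_le [DecidableRel G.Adj] [DecidableRel H.Adj] [Nonempty α]
    [Nonempty β] :
    (tensorProd G H).minDegree ≤ G.minDegree * H.minDegree := by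
  obtain ⟨x, hx⟩ := G.exists_minimal_degree_vertex
  obtain ⟨y, hy⟩ := H.exists_minimal_degree_vertex
  rw [hx, hy, ← tensorProd_degree]
  exact minDegree_le_degree _ _

/-- The layer `N_G(c) × {w}` either meets both sides of `A`, or lies on the side of `(x, w)`,
opposite to `(c, y)`, and then `(c, y)` is adjacent to all of it. -/
lemma min_degree_le_card_crossPairs_column [DecidableRel G.Adj] [DecidableRel H.Adj]
    {c x : α} {y w : β} (hcx : G.Adj c x) (hyw : H.Adj y w) (hside : (c, y) ∈ A ↔ (x, w) ∉ A) :
    min (H.degree w) (G.degree c) ≤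
      ((tensorProd G H).crossPairs A ({c} ×ˢ Set.univ) (G.neighborSet c ×ˢ {w})).card := by
  by_cases h : ∃ d, G.Adj c d ∧ ((d, w) ∈ A ↔ (c, y) ∈ A)
  · obtain ⟨d, hcd, hd⟩ := h
    exact min_le_of_left_le (degree_le_card_crossPairs_column hcd hcx (by tauto))
  · simp only [not_exists, not_and] at h
    refine min_le_of_right_le ?_
    have := card_mul_card_le_card_crossPairs (Γ := tensorProd G H) (A := A)
      (P' := {(c, y)}) (Q' := G.neighborFinset c ×ˢ {w})
      (P := {c} ×ˢ Set.univ) (Q := G.neighborSet c ×ˢ {w}) (by simp) (by simp)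
      (by
        simp only [mem_singleton, mem_product, mem_neighborFinset, forall_eq, Prod.forall]
        rintro d _ ⟨hcd, rfl⟩
        exact ⟨⟨hcd, hyw⟩, by have := h d hcd; tauto⟩)
    simpa using this

theorem minDegree_mul_le_ncard_cutEdges_of_not_adj [DecidableRel G.Adj] [DecidableRel H.Adj]
    (hδ : G.minDegree ≤ H.minDegree) {x a b : α} {y : β} (ha : G.Adj x a) (hb : G.Adj x b)
    (hab : ¬G.Adj a b) (haA : (a, y) ∈ A) (hbA : (b, y) ∉ A) :
    G.minDegree * H.minDegree ≤ ((tensorProd G H).cutEdges A).ncard := by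
  set X : Set (α × β) := {a, b} ×ˢ Set.univ
  have hlevel : ∀ w ∈ H.neighborFinset y,
      G.minDegree ≤ ((tensorProd G H).crossPairs A X ({a, b}ᶜ ×ˢ {w})).card := by
    intro w hw
    rw [mem_neighborFinset] at hw
    obtain ⟨c, hc, hcx, hside⟩ :
        ∃ c ∈ ({a, b} : Set α), G.Adj c x ∧ ((c, y) ∈ A ↔ (x, w) ∉ A) := by
      by_cases hxw : (x, w) ∈ A
      · exact ⟨b, by simp, hb.symm, by tauto⟩
      · exact ⟨a, by simp, ha.symm, by tauto⟩
    have hN : G.neighborSet c ⊆ {a, b}ᶜ := by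
      rintro d hcd hd
      rw [mem_neighborSet] at hcd
      rcases hc with rfl | rfl <;> rcases hd with rfl | rfl
      exacts [hcd.ne rfl, hab hcd, hab hcd.symm, hcd.ne rfl]
    calc G.minDegree ≤ min (H.degree w) (G.degree c) :=
          le_min (hδ.trans (H.minDegree_le_degree w)) (G.minDegree_le_degree c)
      _ ≤ _ := min_degree_le_card_crossPairs_column hcx hw hside
      _ ≤ _ := card_le_card <| crossPairs_mono (Set.prod_mono (by simpa using hc) le_rfl)
          (Set.prod_mono hN le_rfl)
  calc G.minDegree * H.minDegree ≤ H.degree y • G.minDegree := by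
        rw [smul_eq_mul, mul_comm]; exact Nat.mul_le_mul_right _ (H.minDegree_le_degree y)
    _ ≤ ∑ w ∈ H.neighborFinset y, ((tensorProd G H).crossPairs A X ({a, b}ᶜ ×ˢ {w})).card := by
        rw [← card_neighborFinset_eq_degree]; exact card_nsmul_le_sum _ _ _ hlevel
    _ ≤ _ := by
        refine sum_card_crossPairs_le_ncard_cutEdges X _ _ _ (fun _ _ => le_rfl)
          (fun _ _ p hp hpX => hp.1 hpX.1) fun _ _ _ _ hne => Or.inr ?_
        exact Set.disjoint_prod.2 (Or.inr (Set.disjoint_singleton.2 hne))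

/-- The layer `N_G(x) × {z}` lies on one side of `A`; its part over `NA` or over `NAc` is joined
to the part of `N_G(x) × {y}` on the other side. -/
lemma card_mul_card_le_card_crossPairs_layers {x : α} {y z : β} (hzy : H.Adj z y)
    {NA NAc : Finset α} (hNA : ∀ c ∈ NA, G.Adj x c ∧ (c, y) ∈ A)
    (hNAc : ∀ d ∈ NAc, G.Adj x d ∧ (d, y) ∉ A) (hadj : ∀ c ∈ NA, ∀ d ∈ NAc, G.Adj c d)
    (hz : ¬∃ d₁ d₂, G.Adj x d₁ ∧ G.Adj x d₂ ∧ (d₁, z) ∈ A ∧ (d₂, z) ∉ A) :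
    NA.card * NAc.card ≤ ((tensorProd G H).crossPairs A
      (G.neighborSet x ×ˢ {z}) (G.neighborSet x ×ˢ {y})).card := by
  by_cases hzA : ∃ d, G.Adj x d ∧ (d, z) ∈ A
  · obtain ⟨d₀, hd₀, hd₀A⟩ := hzA
    have := card_mul_card_le_card_crossPairs (Γ := tensorProd G H) (A := A)
      (P' := NA ×ˢ {z}) (Q' := NAc ×ˢ {y}) (P := G.neighborSet x ×ˢ {z})
      (Q := G.neighborSet x ×ˢ {y})
      (fun p hp => by simp only [coe_product, coe_singleton] at hp; exact ⟨(hNA _ hp.1).1, hp.2⟩)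
      (fun q hq => by simp only [coe_product, coe_singleton] at hq; exact ⟨(hNAc _ hq.1).1, hq.2⟩)
      (by
        simp only [mem_product, mem_singleton, and_imp, Prod.forall]
        rintro c _ hc rfl d _ hd rfl
        refine ⟨⟨hadj c hc d hd, hzy⟩, iff_of_true ?_ (hNAc d hd).2⟩
        by_contra hcz
        exact hz ⟨d₀, c, hd₀, (hNA c hc).1, hd₀A, hcz⟩)
    simpa using this
  · have := card_mul_card_le_card_crossPairs (Γ := tensorProd G H) (A := A)
      (P' := NAc ×ˢ {z}) (Q' := NA ×ˢ {y}) (P := G.neighborSet x ×ˢ {z})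
      (Q := G.neighborSet x ×ˢ {y})
      (fun p hp => by simp only [coe_product, coe_singleton] at hp; exact ⟨(hNAc _ hp.1).1, hp.2⟩)
      (fun q hq => by simp only [coe_product, coe_singleton] at hq; exact ⟨(hNA _ hq.1).1, hq.2⟩)
      (by
        simp only [mem_product, mem_singleton, and_imp, Prod.forall]
        rintro d _ hd rfl c _ hc rfl
        refine ⟨⟨(hadj c hc d hd).symm, hzy⟩, iff_of_false ?_ (not_not.2 (hNA c hc).2)⟩
        exact fun hdz => hzA ⟨d, (hNAc d hd).1, hdz⟩)
    simpa [mul_comm] using this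

/-- All pairs run from `X = {x} × V(H) ∪ V(G) × Mono` to its complement, since `x ∉ N_G(x)`,
`y ∉ Mono` and `Split` is disjoint from `Mono`. -/
lemma sum_card_crossPairs_stars_add_sum_card_crossPairs_layers_le (x : α) (y : β)
    (Split Mono : Finset β) (hMono : ∀ z ∈ Mono, H.Adj y z) (hdisj : Disjoint Split Mono) :
    ∑ h ∈ Split, ((tensorProd G H).crossPairs A ({x} ×ˢ Set.univ) (G.neighborSet x ×ˢ {h})).card +
      ∑ z ∈ Mono, ((tensorProd G H).crossPairs A
        (G.neighborSet x ×ˢ {z}) (G.neighborSet x ×ˢ {y})).card ≤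
      ((tensorProd G H).cutEdges A).ncard := by
  have := sum_card_crossPairs_le_ncard_cutEdges (Γ := tensorProd G H) (A := A)
    {p | p.1 = x ∨ p.2 ∈ Mono} (Split.disjSum Mono)
    (Sum.elim (fun _ => {x} ×ˢ Set.univ) (fun z => G.neighborSet x ×ˢ {z}))
    (Sum.elim (fun h => G.neighborSet x ×ˢ {h}) (fun _ => G.neighborSet x ×ˢ {y})) ?_ ?_ ?_
  · simpa only [sum_disjSum, Sum.elim_inl, Sum.elim_inr] using this
  · rintro (h | z) hi p ⟨hp₁, hp₂⟩
    · exact Or.inl hp₁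
    · exact Or.inr (hp₂ ▸ by simpa using hi)
  · rintro (h | z) hi p ⟨hp₁, hp₂⟩ (hpx | hpM)
    · exact G.loopless.irrefl x (hpx ▸ hp₁)
    · exact disjoint_left.1 hdisj (by simpa using hi) (hp₂ ▸ hpM)
    · exact G.loopless.irrefl x (hpx ▸ hp₁)
    · exact (hMono _ hpM).ne (hp₂ ▸ rfl)
  · rintro (h | z) - (h' | z') - hne
    · exact Or.inr <| Set.disjoint_prod.2 <| Or.inr <| Set.disjoint_singleton.2 (by simpa using hne)
    · exact Or.inl <| Set.disjoint_prod.2 <| Or.inl <|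
        Set.disjoint_singleton_left.2 (G.loopless.irrefl x)
    · exact Or.inl <| Set.disjoint_prod.2 <| Or.inl <|
        Set.disjoint_singleton_right.2 (G.loopless.irrefl x)
    · exact Or.inl <| Set.disjoint_prod.2 <| Or.inr <| Set.disjoint_singleton.2 (by simpa using hne)

theorem minDegree_mul_le_ncard_cutEdges_of_adj [DecidableRel G.Adj] [DecidableRel H.Adj]
    (hδ : G.minDegree ≤ H.minDegree) {x a b : α} {y : β} (ha : G.Adj x a) (hb : G.Adj x b)
    (haA : (a, y) ∈ A) (hbA : (b, y) ∉ A)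
    (hadj : ∀ c d, G.Adj x c → G.Adj x d → (c, y) ∈ A → (d, y) ∉ A → G.Adj c d) :
    G.minDegree * H.minDegree ≤ ((tensorProd G H).cutEdges A).ncard := by
  classical
  set Split : Finset β := {h | ∃ d₁ d₂, G.Adj x d₁ ∧ G.Adj x d₂ ∧ (d₁, h) ∈ A ∧ (d₂, h) ∉ A}
  set Mono : Finset β := H.neighborFinset y \ Split
  set NA : Finset α := {c ∈ G.neighborFinset x | (c, y) ∈ A}
  set NAc : Finset α := {c ∈ G.neighborFinset x | (c, y) ∉ A}
  have hySplit : y ∈ Split := by simpa [Split] using ⟨a, ha, b, hb, haA, hbA⟩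
  have hstar : ∀ h ∈ Split, H.minDegree ≤ ((tensorProd G H).crossPairs A
      ({x} ×ˢ Set.univ) (G.neighborSet x ×ˢ {h})).card := by
    intro h hh
    obtain ⟨d₁, d₂, h₁, h₂, hd₁, hd₂⟩ := (mem_filter.1 hh).2
    exact (H.minDegree_le_degree h).trans
      (degree_le_card_crossPairs_column h₁ h₂ (iff_of_true hd₁ hd₂))
  have hlayer : ∀ z ∈ Mono, NA.card * NAc.card ≤ ((tensorProd G H).crossPairs A
      (G.neighborSet x ×ˢ {z}) (G.neighborSet x ×ˢ {y})).card := by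
    intro z hz
    obtain ⟨hyz, hzSplit⟩ := mem_sdiff.1 hz
    refine card_mul_card_le_card_crossPairs_layers ((mem_neighborFinset _ _ _).1 hyz).symm
      (fun c hc => by simpa [NA] using hc) (fun d hd => by simpa [NAc] using hd)
      (fun c hc d hd => ?_) (by simpa [Split] using hzSplit)
    simp only [NA, NAc, mem_filter, mem_neighborFinset] at hc hd
    exact hadj c d hc.1 hd.1 hc.2 hd.2
  have hlevels : H.degree y + 1 ≤ Split.card + Mono.card := by
    have hcover : H.neighborFinset y ⊆ Split.erase y ∪ Mono := fun z hz => by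
      by_cases hzSplit : z ∈ Split
      · exact mem_union_left _ (mem_erase.2 ⟨((mem_neighborFinset _ _ _).1 hz).ne', hzSplit⟩)
      · exact mem_union_right _ (mem_sdiff.2 ⟨hz, hzSplit⟩)
    have := (card_le_card hcover).trans (card_union_le _ _)
    rw [card_erase_of_mem hySplit, card_neighborFinset_eq_degree] at this
    have := card_pos.2 ⟨y, hySplit⟩
    omega
  have hlayer_size : G.minDegree ≤ NA.card * NAc.card + 1 := by
    have hsplit : NA.card + NAc.card = G.degree x := by
      rw [card_filter_add_card_filter_not, card_neighborFinset_eq_degree]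
    have hNA : 1 ≤ NA.card := card_pos.2 ⟨a, by simp [NA, ha, haA]⟩
    have hNAc : 1 ≤ NAc.card := card_pos.2 ⟨b, by simp [NAc, hb, hbA]⟩
    nlinarith [G.minDegree_le_degree x]
  have hcut := sum_card_crossPairs_stars_add_sum_card_crossPairs_layers_le (G := G) (A := A)
    x y Split Mono (fun z hz => (mem_neighborFinset _ _ _).1 (mem_sdiff.1 hz).1) disjoint_sdiff
  have hstars := card_nsmul_le_sum Split _ _ hstar
  have hlayers := card_nsmul_le_sum Mono _ _ hlayer
  rw [smul_eq_mul] at hstars hlayers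
  have := mul_le_add_mul_of_le_add_one hδ (card_pos.2 ⟨y, hySplit⟩)
    ((Nat.add_le_add_right (H.minDegree_le_degree y) 1).trans hlevels) hlayer_size
  omega

theorem minDegree_mul_le_ncard_cutEdges [DecidableRel G.Adj] [DecidableRel H.Adj]
    (hδ : G.minDegree ≤ H.minDegree) {x a b : α} {y : β} (ha : G.Adj x a) (hb : G.Adj x b)
    (haA : (a, y) ∈ A) (hbA : (b, y) ∉ A) :
    G.minDegree * H.minDegree ≤ ((tensorProd G H).cutEdges A).ncard := by
  by_cases h : ∃ c d, G.Adj x c ∧ G.Adj x d ∧ (c, y) ∈ A ∧ (d, y) ∉ A ∧ ¬G.Adj c d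
  · obtain ⟨c, d, hc, hd, hcA, hdA, hcd⟩ := h
    exact minDegree_mul_le_ncard_cutEdges_of_not_adj hδ hc hd hcd hcA hdA
  · simp only [not_exists, not_and, not_not] at h
    exact minDegree_mul_le_ncard_cutEdges_of_adj hδ ha hb haA hbA h

end TensorProd

theorem neighborhood_monochromatic_general {α β : Type*} [Fintype α] [Fintype β]
    (G : SimpleGraph α) (H : SimpleGraph β)
    [DecidableRel G.Adj] [DecidableRel H.Adj]
    (hdelta : G.minDegree ≤ H.minDegree)
    (S : Set (Sym2 (α × β)))
    (hSlt : S.ncard < (tensorProd G H).minDegree)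
    (B W : Set (α × β))
    (hunion : B ∪ W = Set.univ) (hdisj : Disjoint B W)
    (hcomp : ∀ p q : α × β, ((tensorProd G H).deleteEdges S).Reachable p q ↔
      ((p ∈ B ∧ q ∈ B) ∨ (p ∈ W ∧ q ∈ W))) :
    ∀ (x : α) (y : β),
      ({p : α × β | p.1 ∈ G.neighborSet x ∧ p.2 = y} ⊆ B) ∨
      ({p : α × β | p.1 ∈ G.neighborSet x ∧ p.2 = y} ⊆ W) := by
  intro x y
  have : Nonempty α := ⟨x⟩
  have : Nonempty β := ⟨y⟩
  have hcut : (tensorProd G H).cutEdges B ⊆ S := by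
    rintro _ ⟨hpq, p, hp, q, hq, rfl⟩
    by_contra hS
    rcases (hcomp p q).1 (deleteEdges_adj.2 ⟨hpq, hS⟩).reachable with ⟨-, hq'⟩ | ⟨hp', -⟩
    · exact hq hq'
    · exact Set.disjoint_left.1 hdisj hp hp'
  by_contra hsplit
  simp only [not_or, Set.not_subset] at hsplit
  obtain ⟨⟨⟨b, y₁⟩, ⟨hb, hy₁ : y₁ = y⟩, hbB⟩, ⟨⟨a, y₂⟩, ⟨ha, hy₂ : y₂ = y⟩, haW⟩⟩ := hsplit
  rw [hy₁] at hbB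
  rw [hy₂] at haW
  have haB : (a, y) ∈ B := ((Set.ext_iff.1 hunion (a, y)).2 trivial).resolve_right haW
  have := minDegree_mul_le_ncard_cutEdges hdelta ha hb haB hbB
  have := Set.ncard_le_ncard hcut
  have := minDegree_tensorProd_le (G := G) (H := H)
  omega

theorem neighborhood_monochromatic {α β : Type*} [Fintype α] [Fintype β]
    [Nonempty α] [Nonempty β] (G : SimpleGraph α) (H : SimpleGraph β)
    [DecidableRel G.Adj] [DecidableRel H.Adj]
    (hdelta : G.minDegree ≤ H.minDegree)
    (S : Set (Sym2 (α × β))) (hSsub : S ⊆ (tensorProd G H).edgeSet)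
    (hSdisc : ¬ ((tensorProd G H).deleteEdges S).Connected)
    (hSmin : S.ncard = edgeConn (tensorProd G H))
    (hSlt : S.ncard < (tensorProd G H).minDegree)
    (B W : Set (α × β)) (hBne : B.Nonempty) (hWne : W.Nonempty)
    (hunion : B ∪ W = Set.univ) (hdisj : Disjoint B W)
    (hcomp : ∀ p q : α × β, ((tensorProd G H).deleteEdges S).Reachable p q ↔
      ((p ∈ B ∧ q ∈ B) ∨ (p ∈ W ∧ q ∈ W))) :
    ∀ (x : α) (y : β),
      ({p : α × β | p.1 ∈ G.neighborSet x ∧ p.2 = y} ⊆ B) ∨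
      ({p : α × β | p.1 ∈ G.neighborSet x ∧ p.2 = y} ⊆ W) :=
  neighborhood_monochromatic_general G H hdelta S hSlt B W hunion hdisj hcomp
end
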